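/- In the computability predicate for the labeled system: (I) every computable term is terminating; (II) computability is preserved under reduction; (III) if ℓ is a pattern (in a system where all constructor argument types have order 0) and ℓγ is computable, then γ(x) is computable for every variable x in ℓ. -/

import Mathlib

/-! # Applicative term rewriting systems (ATRSs) -/

/-- Simple types over a countable set of sorts. -/
inductive Ty where
  | base : ℕ → Ty
  | arrow : Ty → Ty → Ty

/-- Type order: sorts have order 0, `σ ⇒ τ` has order `max (order σ + 1) (order τ)`. -/
def Ty.order : Ty → ℕ
  | .base _ => 0
  | .arrow σ τ => max (σ.order + 1) τ.order

/-- Applicative terms over a set `α` of function symbols, with variables `ℕ`. -/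
inductive Tm (α : Type) where
  | sym : α → Tm α
  | var : ℕ → Tm α
  | app : Tm α → Tm α → Tm α

mutual
  /-- Strict subterm: `t` is a strict subterm of `s₁ s₂` if it is a strict
  subterm of `s₁` or a subterm of `s₂` (heads of applications are not subterms). -/
  inductive StrSubtm {α : Type} : Tm α → Tm α → Prop where
    | left {t s u : Tm α} : StrSubtm t s → StrSubtm t (Tm.app s u)
    | right {t s u : Tm α} : Subtm t u → StrSubtm t (Tm.app s u)
  /-- Subterm: `t ⊴ s` iff `t = s` or `t` is a strict subterm of `s`. -/
  inductive Subtm {α : Type} : Tm α → Tm α → Prop where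
    | refl (s : Tm α) : Subtm s s
    | strict {t s : Tm α} : StrSubtm t s → Subtm t s
end

/-- A signature: which symbols are constructors, their types, and variable types. -/
structure Sig (α : Type) where
  Cons : α → Prop
  typeOf : α → Ty
  varTy : ℕ → Ty

/-- Typing judgement for applicative terms. -/
inductive HasTy {α : Type} (S : Sig α) : Tm α → Ty → Prop where
  | sym (f : α) : HasTy S (.sym f) (S.typeOf f)
  | var (x : ℕ) : HasTy S (.var x) (S.varTy x)
  | app {s t : Tm α} {σ τ : Ty} :
      HasTy S s (.arrow σ τ) → HasTy S t σ → HasTy S (.app s t) τ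

mutual
  /-- Patterns: a variable, or a constructor fully applied (to base type) to patterns. -/
  inductive Pat {α : Type} (S : Sig α) : Tm α → Prop where
    | var (x : ℕ) : Pat S (.var x)
    | cons {s : Tm α} : PatSpine S s → (∃ i, HasTy S s (.base i)) → Pat S s
  /-- A constructor applied to a (possibly incomplete) list of patterns. -/
  inductive PatSpine {α : Type} (S : Sig α) : Tm α → Prop where
    | head {f : α} : S.Cons f → PatSpine S (.sym f)
    | app {s t : Tm α} : PatSpine S s → Pat S t → PatSpine S (.app s t)
end

/-- Ground terms: terms without variables. -/
def Tm.ground {α : Type} : Tm α → Prop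
  | .sym _ => True
  | .var _ => False
  | .app s t => s.ground ∧ t.ground

/-- Data terms: ground patterns. -/
def IsData {α : Type} (S : Sig α) (s : Tm α) : Prop := Pat S s ∧ s.ground

/-- The set of variables of a term. -/
def Tm.vars {α : Type} : Tm α → Set ℕ
  | .sym _ => ∅
  | .var x => {x}
  | .app s t => s.vars ∪ t.vars

/-- Number of occurrences of variable `x` in a term. -/
def Tm.count {α : Type} (x : ℕ) : Tm α → ℕ
  | .sym _ => 0
  | .var y => if y = x then 1 else 0
  | .app s t => Tm.count x s + Tm.count x t

/-- Applying a substitution to a term. -/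
def subst {α : Type} (γ : ℕ → Tm α) : Tm α → Tm α
  | .sym f => .sym f
  | .var x => γ x
  | .app s t => .app (subst γ s) (subst γ t)

/-- A rewrite rule. -/
structure Rule (α : Type) where
  lhs : Tm α
  rhs : Tm α

/-- Left-hand side shape of a constructor rule:
a defined symbol applied to patterns. -/
inductive LhsSpine {α : Type} (S : Sig α) : Tm α → Prop where
  | head {f : α} : ¬ S.Cons f → LhsSpine S (.sym f)
  | app {s t : Tm α} : LhsSpine S s → Pat S t → LhsSpine S (.app s t)

/-- The head symbol of a term, if any. -/
def Tm.headSym {α : Type} : Tm α → Option α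
  | .sym f => some f
  | .var _ => none
  | .app s _ => s.headSym

/-- `t` has the form `c t₁ ⋯ t_m` with `c` a constructor. -/
def ConsHead {α : Type} (S : Sig α) (t : Tm α) : Prop :=
  ∃ f, t.headSym = some f ∧ S.Cons f

/-- A rule is cons-free if every constructor-headed subterm of the right-hand side
is a data term or a (strict) subterm of the left-hand side. -/
def ConsFreeRule {α : Type} (S : Sig α) (ρ : Rule α) : Prop :=
  ∀ t, Subtm t ρ.rhs → ConsHead S t → (IsData S t ∨ StrSubtm t ρ.lhs)

/-- A left-linear cons-free constructor rule (with well-typed sides of equal type,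
and variables of the right-hand side occurring on the left). -/
def GoodRule {α : Type} (S : Sig α) (ρ : Rule α) : Prop :=
  LhsSpine S ρ.lhs ∧
  (∀ x, Tm.count x ρ.lhs ≤ 1) ∧
  ρ.rhs.vars ⊆ ρ.lhs.vars ∧
  (∃ σ, HasTy S ρ.lhs σ ∧ HasTy S ρ.rhs σ) ∧
  ConsFreeRule S ρ

/-- One-step rewriting: closure of rule instances under application contexts. -/
inductive Rew {α : Type} (R : Set (Rule α)) : Tm α → Tm α → Prop where
  | root {ρ : Rule α} {γ : ℕ → Tm α} :
      ρ ∈ R → Rew R (subst γ ρ.lhs) (subst γ ρ.rhs)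
  | appL {s s' t : Tm α} : Rew R s s' → Rew R (.app s t) (.app s' t)
  | appR {s t t' : Tm α} : Rew R t t' → Rew R (.app s t) (.app s t')

/-- `s` is `B`-safe: every constructor-headed subterm of `s` lies in `B`. -/
def BSafe {α : Type} (S : Sig α) (B : Set (Tm α)) (s : Tm α) : Prop :=
  ∀ t, Subtm t s → ConsHead S t → t ∈ B

/-- `B` is a suitable set of data terms: it consists of data terms, is closed
under subterms, and contains all data subterms of right-hand sides of rules. -/
def GoodB {α : Type} (S : Sig α) (R : Set (Rule α)) (B : Set (Tm α)) : Prop :=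
  (∀ t ∈ B, IsData S t) ∧
  (∀ t ∈ B, ∀ u, Subtm u t → u ∈ B) ∧
  (∀ ρ ∈ R, ∀ t, Subtm t ρ.rhs → IsData S t → t ∈ B)

/-- Spine of a basic term: a defined symbol applied to data terms. -/
inductive BasicSpine {α : Type} (S : Sig α) : Tm α → Prop where
  | head {f : α} : ¬ S.Cons f → BasicSpine S (.sym f)
  | app {s t : Tm α} : BasicSpine S s → IsData S t → BasicSpine S (.app s t)

/-- Basic terms: a defined symbol applied to data terms, of base type. -/
def Basic {α : Type} (S : Sig α) (s : Tm α) : Prop :=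
  BasicSpine S s ∧ ∃ i, HasTy S s (.base i)

/-- The set `B_s`: data terms occurring in `s` or in a right-hand side of a rule. -/
def Bset {α : Type} (S : Sig α) (R : Set (Rule α)) (s : Tm α) : Set (Tm α) :=
  { t | IsData S t ∧ (Subtm t s ∨ ∃ ρ ∈ R, Subtm t ρ.rhs) }
/-! # Labeled systems -/

open Classical in
/-- `labelTm S i s` replaces every defined symbol `f` of `s` by its `i`-labeled
copy `(f, i)`; constructors are unaffected (they get the fixed label `0`). -/
noncomputable def labelTm {α : Type} (S : Sig α) (i : ℕ) : Tm α → Tm (α × ℕ)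
  | .sym f => .sym (f, if S.Cons f then 0 else i)
  | .var x => .var x
  | .app s t => .app (labelTm S i s) (labelTm S i t)

/-- Erasing labels. -/
def eraseTm {α : Type} : Tm (α × ℕ) → Tm α
  | .sym p => .sym p.1
  | .var x => .var x
  | .app s t => .app (eraseTm s) (eraseTm t)

/-- The labeled signature: each labeled copy keeps the status and type of the
original symbol. -/
def SigLab {α : Type} (S : Sig α) : Sig (α × ℕ) :=
  { Cons := fun p => S.Cons p.1
    typeOf := fun p => S.typeOf p.1
    varTy := S.varTy }

/-- The labeled rules: `f_{i+1} → f_i` for every defined symbol `f`, and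
`f_{i+1} ℓ₁ ⋯ ℓ_k → label_i(r)` for every rule `f ℓ₁ ⋯ ℓ_k → r` of `R`. -/
def RLab {α : Type} (S : Sig α) (R : Set (Rule α)) : Set (Rule (α × ℕ)) :=
  { ρ' | ∃ f i, ¬ S.Cons f ∧ ρ' = ⟨.sym (f, i + 1), .sym (f, i)⟩ } ∪
  { ρ' | ∃ ρ ∈ R, ∃ i, ρ' = ⟨labelTm S (i + 1) ρ.lhs, labelTm S i ρ.rhs⟩ }

/-- A symbol applied to a list of arguments. -/
def mkApp {α : Type} (h : Tm α) (l : List (Tm α)) : Tm α := l.foldl Tm.app h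

/-- All argument types of a type are of order 0 (base types). -/
def ConsArgsBase : Ty → Prop
  | .base _ => True
  | .arrow σ τ => σ.order = 0 ∧ ConsArgsBase τ

/-- Termination of a term: no infinite reduction starts from it. -/
def TerminatingTm {α : Type} (R : Set (Rule α)) (s : Tm α) : Prop :=
  ¬ ∃ seq : ℕ → Tm α, seq 0 = s ∧ ∀ n, Rew R (seq n) (seq (n + 1))

/-- The computability predicate, by recursion on types: a base-type term is
computable iff it is terminating; `s : σ ⇒ τ` is computable iff `s t` is
computable for every computable `t : σ`. -/
def Comp {α : Type} (S : Sig α) (R : Set (Rule α)) : Ty → Tm α → Prop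
  | .base _, s => TerminatingTm R s
  | .arrow σ τ, s => ∀ t, HasTy S t σ → Comp S R σ t → Comp S R τ (.app s t)

/-- Existence of a semi-outermost reduction from `s` to `t`. -/
inductive SemiOut {α : Type} (R : Set (Rule α)) : Tm α → Tm α → Prop where
  | refl (s : Tm α) : SemiOut R s s
  | step {f : α} {ss ls : List (Tm α)} {ρ : Rule α} {γ : ℕ → Tm α} {t : Tm α}
      (hρ : ρ ∈ R) (hl : ρ.lhs = mkApp (Tm.sym f) ls)
      (hle : ls.length ≤ ss.length)
      (hargs : ∀ j (hj : j < ls.length),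
        SemiOut R (ss[j]'(lt_of_lt_of_le hj hle)) (subst γ (ls[j]'hj)))
      (hvar : ∀ j (hj : j < ls.length), (∃ x, ls[j]'hj = Tm.var x) →
        ss[j]'(lt_of_lt_of_le hj hle) = subst γ (ls[j]'hj))
      (hrest : SemiOut R (mkApp (subst γ ρ.rhs) (ss.drop ls.length)) t) :
      SemiOut R (mkApp (Tm.sym f) ss) t

/-!
Properties (II) and (III) are local: termination is preserved by reduction, and since
constructors take only base-type arguments, every variable of a non-variable pattern has base
type, where computability is termination, which passes to subterms.

Property (I) cannot be shown by the usual induction on types, since a type need not contain a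
term to apply a functional term to. Instead every well-typed labeled term is shown terminating,
with a computability predicate `SNComp` that has termination built in at every type. A labeled
symbol `f_i` is `SNComp` by induction on `i` and on the termination of its arguments: a root step
either collapses `f_{i+1}` to `f_i`, or replaces an instance `(f ℓ₁ ⋯ ℓₖ)γ` of a left-hand side by
`label_{i-1}(r)γ`, whose symbols have smaller labels and whose substitution `γ` is computable by
the pattern argument of (III).
-/

variable {β : Type}

section Rewriting

variable {Q : Set (Rule β)} {s t u v w : Tm β}

abbrev SN (Q : Set (Rule β)) : Tm β → Prop := Acc (flip (Rew Q))

theorem terminatingTm_iff_sn : TerminatingTm Q s ↔ SN Q s :=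
  not_iff_comm.mp not_acc_iff_exists_descending_chain

theorem Rew.inv (h : Rew Q s w) :
    (∃ ρ ∈ Q, ∃ γ, s = subst γ ρ.lhs ∧ w = subst γ ρ.rhs) ∨
    (∃ u v u', s = .app u v ∧ Rew Q u u' ∧ w = .app u' v) ∨
    (∃ u v v', s = .app u v ∧ Rew Q v v' ∧ w = .app u v') := by
  cases h with
  | root hρ => exact .inl ⟨_, hρ, _, rfl, rfl⟩
  | appL h => exact .inr (.inl ⟨_, _, _, rfl, h, rfl⟩)
  | appR h => exact .inr (.inr ⟨_, _, _, rfl, h, rfl⟩)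

theorem SN.app_left (h : SN Q (.app u v)) : SN Q u :=
  RelHomClass.acc (⟨(Tm.app · v), Rew.appL⟩ : flip (Rew Q) →r flip (Rew Q)) u h

theorem SN.app_right (h : SN Q (.app u v)) : SN Q v :=
  RelHomClass.acc (⟨(Tm.app u ·), Rew.appR⟩ : flip (Rew Q) →r flip (Rew Q)) v h

theorem SN.of_subst_var {γ : ℕ → Tm β} {x : ℕ} (h : SN Q (subst γ t)) (hx : x ∈ t.vars) :
    SN Q (γ x) := by
  induction t with
  | sym f => exact absurd hx (Set.notMem_empty x)
  | var y => obtain rfl : x = y := hx; exact h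
  | app a b iha ihb => exact hx.elim (iha h.app_left) (ihb h.app_right)

theorem Comp.rew {T : Sig β} : ∀ {σ : Ty} {s t : Tm β}, Comp T Q σ s → Rew Q s t → Comp T Q σ t
  | .base _, _, _, hs, hst => terminatingTm_iff_sn.2 ((terminatingTm_iff_sn.1 hs).inv hst)
  | .arrow _ _, _, _, hs, hst => fun u hu hcu => (hs u hu hcu).rew (.appL hst)

end Rewriting

section Spines

variable {Q : Set (Rule β)}

theorem mkApp_append (h : Tm β) (l₁ l₂ : List (Tm β)) :
    mkApp h (l₁ ++ l₂) = mkApp (mkApp h l₁) l₂ :=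
  List.foldl_append

theorem mkApp_concat (h t : Tm β) (l : List (Tm β)) :
    mkApp h (l ++ [t]) = .app (mkApp h l) t := by
  rw [mkApp_append]; rfl

theorem headSym_mkApp (h : Tm β) (l : List (Tm β)) : (mkApp h l).headSym = h.headSym := by
  induction l generalizing h with
  | nil => rfl
  | cons t l ih => exact ih (.app h t)

theorem mkApp_sym_inj {a b : β} {l₁ l₂ : List (Tm β)}
    (h : mkApp (.sym a) l₁ = mkApp (.sym b) l₂) : a = b ∧ l₁ = l₂ := by
  induction l₁ using List.reverseRecOn generalizing l₂ with
  | nil =>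
    induction l₂ using List.reverseRecOn with
    | nil => exact ⟨Tm.sym.inj h, rfl⟩
    | append_singleton l₂ t _ => rw [mkApp_concat] at h; cases h
  | append_singleton l₁ t ih =>
    induction l₂ using List.reverseRecOn with
    | nil => rw [mkApp_concat] at h; cases h
    | append_singleton l₂ t' _ =>
      rw [mkApp_concat, mkApp_concat] at h
      obtain ⟨hab, rfl⟩ := ih (Tm.app.inj h).1
      exact ⟨hab, by rw [(Tm.app.inj h).2]⟩

theorem subst_mkApp (γ : ℕ → Tm β) (h : Tm β) (l : List (Tm β)) :
    subst γ (mkApp h l) = mkApp (subst γ h) (l.map (subst γ)) := by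
  induction l generalizing h with
  | nil => rfl
  | cons t l ih => exact ih (.app h t)

theorem mem_vars_mkApp {g : β} {l : List (Tm β)} {x : ℕ} (hx : x ∈ (mkApp (.sym g) l).vars) :
    ∃ t ∈ l, x ∈ t.vars := by
  induction l using List.reverseRecOn with
  | nil => exact absurd hx (Set.notMem_empty x)
  | append_singleton l t ih =>
    rw [mkApp_concat] at hx
    rcases hx with hx | hx
    · obtain ⟨u, hu, hxu⟩ := ih hx
      exact ⟨u, List.mem_append_left _ hu, hxu⟩
    · exact ⟨t, by simp, hx⟩

theorem Rew.mkApp_left {u u' : Tm β} (h : Rew Q u u') (l : List (Tm β)) :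
    Rew Q (mkApp u l) (mkApp u' l) := by
  induction l generalizing u u' with
  | nil => exact h
  | cons t l ih => exact ih h.appL

theorem Rew.mkApp_set {h t' : Tm β} {l : List (Tm β)} {j : ℕ} (hj : j < l.length)
    (ht : Rew Q l[j] t') : Rew Q (mkApp h l) (mkApp h (l.set j t')) := by
  induction l generalizing h j with
  | nil => simp at hj
  | cons t l ih =>
    cases j with
    | zero => exact (Rew.appR ht).mkApp_left l
    | succ j => exact ih (h := .app h t) (by simpa using hj) ht

theorem Rew.of_mkApp_sym {f : β} {l : List (Tm β)} {w : Tm β} (hw : Rew Q (mkApp (.sym f) l) w) :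
    (∃ n ≤ l.length, ∃ ρ ∈ Q, ∃ γ, mkApp (.sym f) (l.take n) = subst γ ρ.lhs ∧
        w = mkApp (subst γ ρ.rhs) (l.drop n)) ∨
    (∃ j, ∃ hj : j < l.length, ∃ t', Rew Q l[j] t' ∧ w = mkApp (.sym f) (l.set j t')) := by
  induction l using List.reverseRecOn generalizing w with
  | nil =>
    rcases hw.inv with ⟨ρ, hρ, γ, he, rfl⟩ | ⟨_, _, _, he, -⟩ | ⟨_, _, _, he, -⟩
    · exact .inl ⟨0, le_rfl, ρ, hρ, γ, he, rfl⟩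
    all_goals cases he
  | append_singleton l t ih =>
    rw [mkApp_concat] at hw
    rcases hw.inv with ⟨ρ, hρ, γ, he, rfl⟩ | ⟨_, _, u', he, hu, rfl⟩ | ⟨_, _, t', he, ht, rfl⟩
    · refine .inl ⟨(l ++ [t]).length, le_rfl, ρ, hρ, γ, ?_, ?_⟩
      · rwa [List.take_length, mkApp_concat]
      · rw [List.drop_length]; rfl
    all_goals obtain ⟨rfl, rfl⟩ := Tm.app.inj he
    · rcases ih hu with ⟨n, hn, ρ, hρ, γ, he, rfl⟩ | ⟨j, hj, t', ht, rfl⟩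
      · refine .inl ⟨n, by simp; omega, ρ, hρ, γ, ?_, ?_⟩
        · rwa [List.take_append_of_le_length hn]
        · rw [List.drop_append_of_le_length hn, mkApp_concat]
      · refine .inr ⟨j, by simp; omega, t', by simpa [List.getElem_append_left hj] using ht, ?_⟩
        rw [List.set_append_left _ _ hj, mkApp_concat]
    · refine .inr ⟨l.length, by simp, t', by simpa using ht, ?_⟩
      simp [mkApp_concat]

end Spines

section RigidHeads

variable {T : Sig β} {Q : Set (Rule β)} {s u v w : Tm β}

def RigidHead (T : Sig β) (s : Tm β) : Prop := ∀ f, s.headSym = some f → T.Cons f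

def DefinedLhsHeads (T : Sig β) (Q : Set (Rule β)) : Prop :=
  ∀ ρ ∈ Q, ∃ f, ρ.lhs.headSym = some f ∧ ¬ T.Cons f

theorem headSym_subst {t : Tm β} {f : β} (h : t.headSym = some f) (γ : ℕ → Tm β) :
    (subst γ t).headSym = some f := by
  induction t with
  | sym g => exact h
  | var x => cases h
  | app a b iha _ => exact iha h

theorem RigidHead.ne_subst_lhs (hQ : DefinedLhsHeads T Q) (hs : RigidHead T s) {ρ : Rule β}
    (hρ : ρ ∈ Q) (γ : ℕ → Tm β) : s ≠ subst γ ρ.lhs := by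
  rintro rfl
  obtain ⟨f, hf, hfc⟩ := hQ ρ hρ
  exact hfc (hs f (headSym_subst hf γ))

theorem RigidHead.rew (hQ : DefinedLhsHeads T Q) (hs : RigidHead T s) (hw : Rew Q s w) :
    RigidHead T w := by
  induction hw with
  | root hρ => exact absurd rfl (hs.ne_subst_lhs hQ hρ _)
  | appL _ ih => exact ih hs
  | appR _ _ => exact hs

theorem RigidHead.sn_of_ne_app (hQ : DefinedLhsHeads T Q) (hs : RigidHead T s)
    (hatom : ∀ u v, s ≠ .app u v) : SN Q s := by
  refine Acc.intro s fun w hw => ?_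
  rcases Rew.inv hw with ⟨ρ, hρ, γ, he, -⟩ | ⟨u, v, -, he, -⟩ | ⟨u, v, -, he, -⟩
  · exact absurd he (hs.ne_subst_lhs hQ hρ γ)
  all_goals exact absurd he (hatom u v)

/-- No root step is possible in `u v`, so a step is taken in `u` or in `v`. -/
theorem RigidHead.sn_app (hQ : DefinedLhsHeads T Q) (hu : SN Q u) (hrigid : RigidHead T u)
    (hv : SN Q v) : SN Q (.app u v) := by
  induction hu generalizing v with
  | intro u _ ihu =>
    induction hv with
    | intro v hv ihv =>
      refine Acc.intro _ fun w hw => ?_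
      rcases Rew.inv hw with ⟨ρ, hρ, γ, he, -⟩ | ⟨_, _, u', he, hu', rfl⟩ | ⟨_, _, v', he, hv', rfl⟩
      · exact absurd he ((show RigidHead T (.app u v) from hrigid).ne_subst_lhs hQ hρ γ)
      all_goals obtain ⟨rfl, rfl⟩ := Tm.app.inj he
      · exact ihu u' hu' (hrigid.rew hQ hu') (Acc.intro v hv)
      · exact ihv v' hv'

theorem RigidHead.sn_mkApp (hQ : DefinedLhsHeads T Q) {h : Tm β} (hrigid : RigidHead T h)
    (hh : SN Q h) {l : List (Tm β)} (hl : ∀ t ∈ l, SN Q t) : SN Q (mkApp h l) := by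
  induction l generalizing h with
  | nil => exact hh
  | cons t l ih =>
    exact ih (h := .app h t) hrigid (RigidHead.sn_app hQ hh hrigid (hl t (by simp)))
      fun u hu => hl u (by simp [hu])

end RigidHeads

section SNComp

variable {Q : Set (Rule β)}

/-- Computability with termination required at every type and no typing of arguments: unlike
`Comp`, it yields termination even at types whose argument types have no inhabitants. -/
def SNComp (Q : Set (Rule β)) : Ty → Tm β → Prop
  | .base _, s => SN Q s
  | .arrow σ τ, s => SN Q s ∧ ∀ t, SNComp Q σ t → SNComp Q τ (.app s t)

theorem SNComp.sn : ∀ {σ : Ty} {s : Tm β}, SNComp Q σ s → SN Q s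
  | .base _, _, h => h
  | .arrow _ _, _, h => h.1

theorem SNComp.rew : ∀ {σ : Ty} {s t : Tm β}, SNComp Q σ s → Rew Q s t → SNComp Q σ t
  | .base _, _, _, hs, hst => hs.inv hst
  | .arrow _ _, _, _, hs, hst => ⟨hs.1.inv hst, fun u hu => (hs.2 u hu).rew (.appL hst)⟩

theorem RigidHead.snComp {T : Sig β} (hQ : DefinedLhsHeads T Q) :
    ∀ {σ : Ty} {s : Tm β}, RigidHead T s → SN Q s → SNComp Q σ s
  | .base _, _, _, hsn => hsn
  | .arrow _ _, _, hs, hsn => ⟨hsn, fun _ ht =>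
      RigidHead.snComp hQ (show RigidHead T (.app _ _) from hs) (hs.sn_app hQ hsn ht.sn)⟩

inductive SNCompArgs (Q : Set (Rule β)) : Ty → List (Tm β) → Ty → Prop
  | nil (τ : Ty) : SNCompArgs Q τ [] τ
  | cons {σ τ τ' : Ty} {t : Tm β} {ts : List (Tm β)} :
      SNComp Q σ t → SNCompArgs Q τ ts τ' → SNCompArgs Q (.arrow σ τ) (t :: ts) τ'

theorem SNComp.mkApp {τ τ' : Ty} {W : Tm β} {ts : List (Tm β)} (hW : SNComp Q τ W)
    (hts : SNCompArgs Q τ ts τ') : SNComp Q τ' (mkApp W ts) := by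
  induction hts generalizing W with
  | nil => exact hW
  | cons ht _ ih => exact ih (hW.2 _ ht)

theorem snComp_of_sn_mkApp : ∀ {τ : Ty} {s : Tm β},
    (∀ ts τ', SNCompArgs Q τ ts τ' → SN Q (mkApp s ts)) → SNComp Q τ s
  | .base _, _, h => h [] _ (.nil _)
  | .arrow _ _, _, h => ⟨h [] _ (.nil _), fun t ht =>
      snComp_of_sn_mkApp fun ts τ' hts => h (t :: ts) τ' (.cons ht hts)⟩

theorem SNCompArgs.sn_of_mem {τ τ' : Ty} {ts : List (Tm β)} (h : SNCompArgs Q τ ts τ') :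
    ∀ t ∈ ts, SN Q t := by
  induction h with
  | nil => simp
  | cons ht _ ih => exact List.forall_mem_cons.2 ⟨ht.sn, ih⟩

theorem SNCompArgs.set {τ τ' : Ty} {ts : List (Tm β)} (h : SNCompArgs Q τ ts τ') {j : ℕ}
    (hj : j < ts.length) {t' : Tm β} (ht : Rew Q ts[j] t') :
    SNCompArgs Q τ (ts.set j t') τ' := by
  induction h generalizing j with
  | nil => simp at hj
  | cons hc hrest ih =>
    cases j with
    | zero => exact .cons (hc.rew ht) hrest
    | succ j => exact .cons hc (ih (by simpa using hj) ht)

theorem SNCompArgs.of_append {τ τ'' : Ty} {ts₁ ts₂ : List (Tm β)}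
    (h : SNCompArgs Q τ (ts₁ ++ ts₂) τ'') :
    ∃ τ', SNCompArgs Q τ ts₁ τ' ∧ SNCompArgs Q τ' ts₂ τ'' := by
  induction ts₁ generalizing τ with
  | nil => exact ⟨τ, .nil τ, h⟩
  | cons t ts₁ ih =>
    cases h with
    | cons ht hrest =>
      obtain ⟨τ', h₁, h₂⟩ := ih hrest
      exact ⟨τ', .cons ht h₁, h₂⟩

end SNComp

section Patterns

variable {T : Sig β}

theorem Ty.eq_base_of_order_eq_zero : ∀ {σ : Ty}, σ.order = 0 → ∃ i, σ = .base i
  | .base i, _ => ⟨i, rfl⟩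
  | .arrow _ _, h => by simp [Ty.order] at h

theorem HasTy.unique {s : Tm β} {σ τ : Ty} (h₁ : HasTy T s σ) (h₂ : HasTy T s τ) : σ = τ := by
  induction h₁ generalizing τ with
  | sym => cases h₂; rfl
  | var => cases h₂; rfl
  | app _ _ ih _ =>
    cases h₂ with
    | app hf _ => cases ih hf; rfl

theorem HasTy.var_inv {x : ℕ} {σ : Ty} (h : HasTy T (.var x) σ) : σ = T.varTy x := by
  cases h; rfl

theorem HasTy.of_mkApp {h : Tm β} {l : List (Tm β)} {σ : Ty} (hσ : HasTy T (mkApp h l) σ) :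
    ∃ τ, HasTy T h τ := by
  induction l generalizing h with
  | nil => exact ⟨σ, hσ⟩
  | cons t l ih =>
    obtain ⟨_, hht⟩ := ih hσ
    cases hht with
    | app hh _ => exact ⟨_, hh⟩

theorem PatSpine.consArgsBase (hC : ∀ f, T.Cons f → ConsArgsBase (T.typeOf f)) :
    ∀ {s : Tm β} {τ : Ty}, PatSpine T s → HasTy T s τ → ConsArgsBase τ
  | _, _, .head hc, .sym _ => hC _ hc
  | _, _, .app hs _, .app hf _ => (hs.consArgsBase hC hf).2

mutual

theorem PatSpine.varTy_base (hC : ∀ f, T.Cons f → ConsArgsBase (T.typeOf f)) :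
    ∀ {s : Tm β} {τ : Ty} {x : ℕ}, PatSpine T s → HasTy T s τ → x ∈ s.vars →
      ∃ i, T.varTy x = .base i
  | _, _, x, .head _, _, hx => absurd hx (Set.notMem_empty x)
  | _, _, _, .app hs hp, .app hf ha, hx => by
    rcases hx with hx | hx
    · exact hs.varTy_base hC hf hx
    · obtain ⟨i, rfl⟩ := Ty.eq_base_of_order_eq_zero (hs.consArgsBase hC hf).1
      exact hp.varTy_base hC ha hx

theorem Pat.varTy_base (hC : ∀ f, T.Cons f → ConsArgsBase (T.typeOf f)) :
    ∀ {s : Tm β} {i : ℕ} {x : ℕ}, Pat T s → HasTy T s (.base i) → x ∈ s.vars →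
      ∃ j, T.varTy x = .base j
  | _, i, _, .var _, h, rfl => ⟨i, h.var_inv.symm⟩
  | _, _, _, .cons hs _, h, hx => hs.varTy_base hC h hx

end

/-- The variables of a pattern that is not a variable have base types, where `P` is termination,
and termination passes from `ℓγ` to its subterms `γ x`. -/
theorem Pat.subst_vars (hC : ∀ f, T.Cons f → ConsArgsBase (T.typeOf f)) {Q : Set (Rule β)}
    {P : Ty → Tm β → Prop} (hP : ∀ i s, P (.base i) s ↔ SN Q s) {ℓ : Tm β} {σ : Ty}
    {γ : ℕ → Tm β} (hp : Pat T ℓ) (hty : HasTy T ℓ σ) (h : P σ (subst γ ℓ)) {x : ℕ}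
    (hx : x ∈ ℓ.vars) : P (T.varTy x) (γ x) := by
  cases hp with
  | var y =>
    obtain rfl : x = y := hx
    rwa [← hty.var_inv]
  | cons hs hbase =>
    obtain ⟨i, hi⟩ := hbase
    obtain rfl := hty.unique hi
    obtain ⟨j, hj⟩ := (Pat.cons hs ⟨i, hi⟩).varTy_base hC hi hx
    rw [hj, hP]
    exact ((hP i _).1 h).of_subst_var hx

end Patterns

section Labeling

variable {α : Type} {S : Sig α} {R : Set (Rule α)}

theorem labelTm_sym_of_not_cons {f : α} (hf : ¬ S.Cons f) (k : ℕ) :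
    labelTm S k (.sym f) = .sym (f, k) := by
  simp [labelTm, hf]

theorem labelTm_mkApp (k : ℕ) (h : Tm α) (l : List (Tm α)) :
    labelTm S k (mkApp h l) = mkApp (labelTm S k h) (l.map (labelTm S k)) := by
  induction l generalizing h with
  | nil => rfl
  | cons t l ih => exact ih (.app h t)

theorem vars_labelTm (k : ℕ) (t : Tm α) : (labelTm S k t).vars = t.vars := by
  induction t with
  | sym => rfl
  | var => rfl
  | app a b iha ihb => exact congrArg₂ (· ∪ ·) iha ihb

theorem HasTy.labelTm {t : Tm α} {σ : Ty} (h : HasTy S t σ) (k : ℕ) :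
    HasTy (SigLab S) (labelTm S k t) σ := by
  induction h with
  | sym f => exact .sym (S := SigLab S) _
  | var x => exact .var x
  | app _ _ ihf iha => exact .app ihf iha

mutual

theorem PatSpine.labelTm (k : ℕ) :
    ∀ {t : Tm α}, PatSpine S t → PatSpine (SigLab S) (labelTm S k t)
  | _, .head hc => .head (f := (_, _)) hc
  | _, .app hs hp => .app (hs.labelTm k) (hp.labelTm k)

theorem Pat.labelTm (k : ℕ) : ∀ {t : Tm α}, Pat S t → Pat (SigLab S) (labelTm S k t)
  | _, .var x => .var x
  | _, .cons hs ⟨i, hi⟩ => .cons (hs.labelTm k) ⟨i, hi.labelTm k⟩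

end

theorem LhsSpine.eq_mkApp {t : Tm α} (h : LhsSpine S t) :
    ∃ f ls, ¬ S.Cons f ∧ t = mkApp (.sym f) ls ∧ ∀ l ∈ ls, Pat S l := by
  induction h with
  | head hf => exact ⟨_, [], hf, rfl, by simp⟩
  | @app s t _ hp ih =>
    obtain ⟨f, ls, hf, rfl, hls⟩ := ih
    refine ⟨f, ls ++ [t], hf, (mkApp_concat _ _ _).symm, ?_⟩
    simpa [or_imp, forall_and] using ⟨hls, hp⟩

theorem definedLhsHeads_rLab (hR : ∀ ρ ∈ R, GoodRule S ρ) :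
    DefinedLhsHeads (SigLab S) (RLab S R) := by
  rintro _ (⟨f, i, hf, rfl⟩ | ⟨ρ, hρ, i, rfl⟩)
  · exact ⟨(f, i + 1), rfl, hf⟩
  · obtain ⟨f, ls, hf, hl, -⟩ := (hR ρ hρ).1.eq_mkApp
    refine ⟨(f, i + 1), ?_, hf⟩
    rw [hl, labelTm_mkApp, labelTm_sym_of_not_cons hf, headSym_mkApp]
    rfl

theorem snComp_var (hR : ∀ ρ ∈ R, GoodRule S ρ) (σ : Ty) (x : ℕ) :
    SNComp (RLab S R) σ (.var x) :=
  have hrigid : RigidHead (SigLab S) (.var x) := fun _ h => by cases h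
  hrigid.snComp (definedLhsHeads_rLab hR) (hrigid.sn_of_ne_app (definedLhsHeads_rLab hR)
    fun _ _ h => by cases h)

theorem snComp_sym_of_cons (hR : ∀ ρ ∈ R, GoodRule S ρ) (σ : Ty) {c : α} (hc : S.Cons c)
    (k : ℕ) : SNComp (RLab S R) σ (.sym (c, k)) :=
  have hrigid : RigidHead (SigLab S) (.sym (c, k)) := fun _ h => by cases h; exact hc
  hrigid.snComp (definedLhsHeads_rLab hR) (hrigid.sn_of_ne_app (definedLhsHeads_rLab hR)
    fun _ _ h => by cases h)

theorem snComp_subst_labelTm (hR : ∀ ρ ∈ R, GoodRule S ρ) {k : ℕ}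
    (hdef : ∀ f, ¬ S.Cons f → SNComp (RLab S R) (S.typeOf f) (.sym (f, k)))
    {r : Tm α} {τ : Ty} (hr : HasTy S r τ) {γ : ℕ → Tm (α × ℕ)}
    (hγ : ∀ x ∈ r.vars, SNComp (RLab S R) (S.varTy x) (γ x)) :
    SNComp (RLab S R) τ (subst γ (labelTm S k r)) := by
  induction hr with
  | sym f =>
    by_cases hf : S.Cons f
    · simpa [labelTm, subst, hf] using snComp_sym_of_cons hR (S.typeOf f) hf 0
    · rw [labelTm_sym_of_not_cons hf]; exact hdef f hf
  | var x => exact hγ x rfl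
  | app _ _ ihf iha =>
    exact (ihf fun x hx => hγ x (.inl hx)).2 _ (iha fun x hx => hγ x (.inr hx))

end Labeling

section Termination

variable {α : Type} {S : Sig α} {R : Set (Rule α)}

theorem snComp_vars_of_snCompArgs (hC : ∀ f, S.Cons f → ConsArgsBase (S.typeOf f)) {k : ℕ}
    {γ : ℕ → Tm (α × ℕ)} {ls : List (Tm α)} (hls : ∀ l ∈ ls, Pat S l) :
    ∀ {h : Tm α} {τ σ τ' : Ty}, HasTy S h τ → HasTy S (mkApp h ls) σ →
      SNCompArgs (RLab S R) τ (ls.map fun l => subst γ (labelTm S k l)) τ' →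
      σ = τ' ∧ ∀ l ∈ ls, ∀ x ∈ l.vars, SNComp (RLab S R) (S.varTy x) (γ x) := by
  induction ls with
  | nil =>
    intro h τ σ τ' hh hσ hargs
    cases hargs
    exact ⟨hσ.unique hh, by simp⟩
  | cons l ls ih =>
    intro h τ σ τ' hh hσ hargs
    obtain ⟨π, hπ⟩ := HasTy.of_mkApp (l := ls) hσ
    cases hπ with
    | app hh' hl =>
      obtain rfl := hh.unique hh'
      rw [List.map_cons] at hargs
      cases hargs with
      | cons ht hrest =>
        obtain ⟨rfl, hvars⟩ := ih (fun l hl => hls l (by simp [hl])) (hh.app hl) hσ hrest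
        refine ⟨rfl, List.forall_mem_cons.2 ⟨fun x hx => ?_, hvars⟩⟩
        exact ((hls l (by simp)).labelTm k).subst_vars (fun p => hC p.1) (fun _ _ => Iff.rfl)
          (hl.labelTm k) ht ((vars_labelTm k l).symm ▸ hx)

/-- The reduct of a labeled instance of a rule `f ℓ₁ ⋯ ℓₖ → r` is computable once the symbols of
label `m` are: the `ℓⱼγ` are computable arguments, hence so is `γ` on the variables of `r`. -/
theorem sn_reduct_labeledRule (hR : ∀ ρ ∈ R, GoodRule S ρ)
    (hC : ∀ f, S.Cons f → ConsArgsBase (S.typeOf f)) {ρ : Rule α} (hρ : ρ ∈ R) {i m : ℕ}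
    (hdef : ∀ m' < i, ∀ g, SNComp (RLab S R) (S.typeOf g) (.sym (g, m')))
    {f : α} {ts : List (Tm (α × ℕ))} {τ' : Ty} (hargs : SNCompArgs (RLab S R) (S.typeOf f) ts τ')
    {n : ℕ} {γ : ℕ → Tm (α × ℕ)}
    (hlhs : mkApp (.sym (f, i)) (ts.take n) = subst γ (labelTm S (m + 1) ρ.lhs)) :
    SN (RLab S R) (mkApp (subst γ (labelTm S m ρ.rhs)) (ts.drop n)) := by
  obtain ⟨hspine, -, hvars, ⟨σ, hlty, hrty⟩, -⟩ := hR ρ hρ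
  obtain ⟨g, ls, hg, hl, hpats⟩ := hspine.eq_mkApp
  rw [hl, labelTm_mkApp, subst_mkApp, labelTm_sym_of_not_cons hg, List.map_map] at hlhs
  obtain ⟨hfg, htake⟩ := mkApp_sym_inj hlhs
  obtain ⟨rfl, rfl⟩ := Prod.mk.inj hfg
  rw [← List.take_append_drop n ts] at hargs
  obtain ⟨τ, hpre, hpost⟩ := hargs.of_append
  rw [htake] at hpre
  obtain ⟨rfl, hγ⟩ := snComp_vars_of_snCompArgs hC hpats (.sym f) (hl ▸ hlty) hpre
  have hγr : ∀ x ∈ ρ.rhs.vars, SNComp (RLab S R) (S.varTy x) (γ x) := fun x hx => by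
    obtain ⟨l, hl', hxl⟩ := mem_vars_mkApp (hl ▸ hvars hx)
    exact hγ l hl' x hxl
  exact ((snComp_subst_labelTm hR (fun g _ => hdef m m.lt_succ_self g) hrty hγr).mkApp hpost).sn

theorem sn_reduct_rLab (hR : ∀ ρ ∈ R, GoodRule S ρ)
    (hC : ∀ f, S.Cons f → ConsArgsBase (S.typeOf f)) {i : ℕ}
    (hdef : ∀ m < i, ∀ g, SNComp (RLab S R) (S.typeOf g) (.sym (g, m)))
    {f : α} {ts : List (Tm (α × ℕ))} {τ' : Ty} (hargs : SNCompArgs (RLab S R) (S.typeOf f) ts τ')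
    {n : ℕ} {ρ' : Rule (α × ℕ)} (hρ' : ρ' ∈ RLab S R) {γ : ℕ → Tm (α × ℕ)}
    (hlhs : mkApp (.sym (f, i)) (ts.take n) = subst γ ρ'.lhs) :
    SN (RLab S R) (mkApp (subst γ ρ'.rhs) (ts.drop n)) := by
  rcases hρ' with ⟨g, m, -, rfl⟩ | ⟨ρ, hρ, m, rfl⟩
  · obtain ⟨hfg, htake⟩ := mkApp_sym_inj (l₂ := []) hlhs
    obtain ⟨rfl, rfl⟩ := Prod.mk.inj hfg
    have hts : ts.drop n = ts := by
      simpa [htake] using List.take_append_drop n ts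
    rw [hts]
    exact ((hdef m (by omega) f).mkApp hargs).sn
  · exact sn_reduct_labeledRule hR hC hρ hdef hargs hlhs

/-- Induction on the label `i`: every root step from `f_i t₁ ⋯ tₙ` yields symbols of smaller
labels only. -/
theorem snComp_sym (hR : ∀ ρ ∈ R, GoodRule S ρ)
    (hC : ∀ f, S.Cons f → ConsArgsBase (S.typeOf f)) (i : ℕ) :
    ∀ f, SNComp (RLab S R) (S.typeOf f) (.sym (f, i)) := by
  induction i using Nat.strong_induction_on with
  | _ i hdef =>
  intro f
  refine snComp_of_sn_mkApp fun ts τ' hargs => ?_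
  -- Termination of the arguments is measured by the term `x t₁ ⋯ tₙ`, whose head blocks root steps.
  have hrigid : RigidHead (SigLab S) (Tm.var 0) := fun _ h => by cases h
  have hacc : Acc (InvImage (flip (Rew (RLab S R))) (mkApp (.var 0))) ts :=
    InvImage.accessible _ (hrigid.sn_mkApp (definedLhsHeads_rLab hR) (snComp_var hR (.base 0) 0)
      hargs.sn_of_mem)
  induction hacc with
  | intro ts _ ih =>
  refine Acc.intro _ fun w hw => ?_
  rcases Rew.of_mkApp_sym hw with ⟨n, -, ρ', hρ', γ, hlhs, rfl⟩ | ⟨j, hj, t', ht, rfl⟩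
  · exact sn_reduct_rLab hR hC hdef hargs hρ' hlhs
  · exact ih _ (Rew.mkApp_set hj ht) (hargs.set hj ht)

theorem snComp_of_hasTy (hR : ∀ ρ ∈ R, GoodRule S ρ)
    (hC : ∀ f, S.Cons f → ConsArgsBase (S.typeOf f)) {s : Tm (α × ℕ)} {σ : Ty}
    (h : HasTy (SigLab S) s σ) : SNComp (RLab S R) σ s := by
  induction h with
  | sym p => exact snComp_sym hR hC p.2 p.1
  | var x => exact snComp_var hR _ x
  | app _ _ ihf iha => exact ihf.2 _ iha

end Termination

/-- Properties of the computability predicate for the labeled system: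
(I) computable terms are terminating; (II) computability is preserved under
reduction; (III) if `ℓγ` is computable for a pattern `ℓ` (in a system whose
constructors take only base-type arguments, with a type-preserving
substitution `γ`), then `γ(x)` is computable for every variable `x` of `ℓ`. -/
theorem computability_properties {α : Type} (S : Sig α) (R : Set (Rule α))
    (hR : ∀ ρ ∈ R, GoodRule S ρ)
    (hC : ∀ f, S.Cons f → ConsArgsBase (S.typeOf f)) :
    (∀ (σ : Ty) (s : Tm (α × ℕ)), HasTy (SigLab S) s σ →
      Comp (SigLab S) (RLab S R) σ s → TerminatingTm (RLab S R) s) ∧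
    (∀ (σ : Ty) (s t : Tm (α × ℕ)), HasTy (SigLab S) s σ →
      Comp (SigLab S) (RLab S R) σ s → Rew (RLab S R) s t →
      Comp (SigLab S) (RLab S R) σ t) ∧
    (∀ (ℓ : Tm (α × ℕ)) (σ : Ty) (γ : ℕ → Tm (α × ℕ)),
      Pat (SigLab S) ℓ → HasTy (SigLab S) ℓ σ →
      (∀ x, HasTy (SigLab S) (γ x) ((SigLab S).varTy x)) →
      Comp (SigLab S) (RLab S R) σ (subst γ ℓ) →
      ∀ x ∈ Tm.vars ℓ, Comp (SigLab S) (RLab S R) ((SigLab S).varTy x) (γ x)) :=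
  ⟨fun _ _ hs _ => terminatingTm_iff_sn.2 (snComp_of_hasTy hR hC hs).sn,
    fun _ _ _ _ hs hst => hs.rew hst,
    fun _ _ _ hp hty _ hc _ hx =>
      hp.subst_vars (fun p => hC p.1) (fun _ _ => terminatingTm_iff_sn) hty hc hx⟩
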